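/- arXiv:2509.07797 — 2 statements merged into one kernel-verified Lean document; each statement's English description precedes it below -/
import Mathlib

section
/- For elementary cellular automaton Rule 45 on a ring of size n, a configuration x ∈ {0,1}^n is a fixed point of the synchronous (parallel) update if and only if n is a multiple of 3 and x is one of the three rotations of the periodic word (001) repeated n/3 times. -/
/-- Single-cell update: replace the state of cell `i` by the local rule applied
to its neighborhood on the ring `ZMod n`. -/
def eupdate (n : ℕ) (f : Bool → Bool → Bool → Bool) (x : ZMod n → Bool) (i : ZMod n) :
    ZMod n → Bool :=
  Function.update x i (f (x (i - 1)) (x i) (x (i + 1)))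

/-- Synchronous (parallel) step. -/
def parStep (n : ℕ) (f : Bool → Bool → Bool → Bool) (x : ZMod n → Bool) : ZMod n → Bool :=
  fun i => f (x (i - 1)) (x i) (x (i + 1))

/-- `x` is a fixed point of the parallel dynamics. -/
def IsFixedConfig (n : ℕ) (f : Bool → Bool → Bool → Bool) (x : ZMod n → Bool) : Prop :=
  ∀ i : ZMod n, f (x (i - 1)) (x i) (x (i + 1)) = x i

/-- One full sequential step under the sequential update mode `μ`
(a permutation of the cells): update cells one at a time in the order
`μ 0, μ 1, …, μ (n-1)`. -/
def seqStep (n : ℕ) (f : Bool → Bool → Bool → Bool) (μ : Fin n ≃ ZMod n)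
    (x : ZMod n → Bool) : ZMod n → Bool :=
  (List.finRange n).foldl (fun y k => eupdate n f y (μ k)) x

/-- One full sequential step under the descending order `(n-1, n-2, …, 0)`. -/
def seqStepDesc (n : ℕ) (f : Bool → Bool → Bool → Bool) (x : ZMod n → Bool) : ZMod n → Bool :=
  ((List.range n).reverse).foldl (fun y k => eupdate n f y (k : ZMod n)) x

/-- One full sequential step under the ascending order `(0, 1, …, n-1)`. -/
def seqStepAsc (n : ℕ) (f : Bool → Bool → Bool → Bool) (x : ZMod n → Bool) : ZMod n → Bool :=
  (List.range n).foldl (fun y k => eupdate n f y (k : ZMod n)) x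

def rule45 : Bool → Bool → Bool → Bool
  | true, true, true => false
  | true, true, false => false
  | true, false, true => true
  | true, false, false => false
  | false, true, true => true
  | false, true, false => true
  | false, false, true => false
  | false, false, false => true

/-! A cell is left unchanged by rule 45 exactly when its window is `100`, `010`, `001` or `011`,
and a window `011` cannot be followed by an admissible one. Hence `x` is a fixed point iff every
three consecutive cells hold exactly one `1`. Two overlapping such windows force
`x (i + 3) = x i`; if `3 ∤ n` then `3` is a unit mod `n`, so `x` is constant, which no window
allows, and if `3 ∣ n` then `x` is determined by `x 0, x 1, x 2`, a rotation of `001`. -/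

open Function

def OneHot (a b c : Bool) : Prop :=
  [a, b, c].count true = 1

instance (a b c : Bool) : Decidable (OneHot a b c) :=
  inferInstanceAs (Decidable (_ = _))

theorem rule45_eq_of_oneHot {a b c : Bool} (h : OneHot a b c) : rule45 a b c = b := by
  revert a b c; decide

theorem oneHot_of_rule45_eq {a b c d : Bool} (h₁ : rule45 a b c = b) (h₂ : rule45 b c d = c) :
    OneHot a b c := by
  revert a b c d; decide

theorem OneHot.eq_of_oneHot {a b c d : Bool} (h₁ : OneHot a b c) (h₂ : OneHot b c d) : d = a := by
  revert a b c d; decide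

theorem not_oneHot_self (a : Bool) : ¬OneHot a a a := by
  revert a; decide

theorem OneHot.exists_pattern {a b c : Bool} (h : OneHot a b c) :
    ∃ k < 3, a = decide (k % 3 = 2) ∧ b = decide ((1 + k) % 3 = 2) ∧
      c = decide ((2 + k) % 3 = 2) := by
  revert a b c; decide

theorem isFixedConfig_rule45_iff {n : ℕ} {x : ZMod n → Bool} :
    IsFixedConfig n rule45 x ↔ ∀ i, OneHot (x i) (x (i + 1)) (x (i + 2)) := by
  constructor
  · intro hx i
    have h₁ := hx (i + 1)
    have h₂ := hx (i + 2)
    rw [add_sub_cancel_right, add_assoc, one_add_one_eq_two] at h₁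
    rw [show i + 2 - 1 = i + 1 by ring, add_assoc, two_add_one_eq_three] at h₂
    exact oneHot_of_rule45_eq h₁ h₂
  · intro hx i
    have h := hx (i - 1)
    rw [sub_add_cancel, show i - 1 + 2 = i + 1 by ring] at h
    exact rule45_eq_of_oneHot h

theorem periodic_three_of_oneHot {n : ℕ} {x : ZMod n → Bool}
    (hx : ∀ i, OneHot (x i) (x (i + 1)) (x (i + 2))) : Periodic x 3 := by
  intro i
  have h := hx (i + 1)
  rw [show i + 1 + 1 = i + 2 by ring, show i + 1 + 2 = i + 3 by ring] at h
  exact (hx i).eq_of_oneHot h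

theorem Function.Periodic.apply_eq_apply_zero_of_coprime {α : Type*} {n c : ℕ}
    {x : ZMod n → α} (hx : Periodic x c) (hc : c.Coprime n) (i : ZMod n) : x i = x 0 := by
  have h₁ : Periodic x 1 := by
    simpa [ZMod.intCast_zmod_cast, mul_comm, ZMod.coe_mul_inv_eq_one c hc] using
      hx.int_mul (ZMod.cast (c : ZMod n)⁻¹)
  simpa [ZMod.intCast_zmod_cast] using h₁.int_mul_eq (ZMod.cast i)

theorem Function.Periodic.apply_eq_apply_val_mod {α : Type*} {n c : ℕ} [NeZero n]
    {x : ZMod n → α} (hx : Periodic x c) (i : ZMod n) : x i = x (i.val % c : ℕ) := by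
  conv_lhs => rw [← ZMod.natCast_zmod_val i, ← Nat.mod_add_div' i.val c]
  push_cast
  exact hx.nat_mul _ _

def pattern001 (n k : ℕ) : ZMod n → Bool :=
  fun i => decide ((i.val + k) % 3 = 2)

theorem eq_pattern001_of_periodic {n : ℕ} [NeZero n] {x : ZMod n → Bool} (hx : Periodic x 3)
    (h : OneHot (x 0) (x 1) (x 2)) :
    ∃ k < 3, ∀ i, x i = pattern001 n k i := by
  obtain ⟨k, hk, h₀, h₁, h₂⟩ := h.exists_pattern
  refine ⟨k, hk, fun i => ?_⟩
  rw [hx.apply_eq_apply_val_mod, pattern001, Nat.add_mod, Nat.mod_eq_of_lt hk]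
  have hr : i.val % 3 < 3 := Nat.mod_lt _ three_pos
  generalize i.val % 3 = r at hr ⊢
  interval_cases r <;> simpa [Nat.add_mod_mod]

theorem pattern001_eq_decide_castHom {n : ℕ} [NeZero n] (h : 3 ∣ n) (k : ℕ) (i : ZMod n) :
    pattern001 n k i = decide (ZMod.castHom h (ZMod 3) i + k = 2) := by
  have h₂ := ZMod.natCast_eq_natCast_iff' (i.val + k) 2 3
  push_cast at h₂
  rw [pattern001, ZMod.castHom_apply, ZMod.cast_eq_val, decide_eq_decide, h₂]

theorem oneHot_pattern001 {n : ℕ} [NeZero n] (h : 3 ∣ n) (k : ℕ) (i : ZMod n) :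
    OneHot (pattern001 n k i) (pattern001 n k (i + 1)) (pattern001 n k (i + 2)) := by
  simp only [pattern001_eq_decide_castHom h, map_add, map_one, map_ofNat]
  generalize ZMod.castHom h (ZMod 3) i = r
  generalize (k : ZMod 3) = s
  revert r s; decide

theorem rule45_fixed_points (n : ℕ) (hn : 0 < n) (x : ZMod n → Bool) :
    IsFixedConfig n rule45 x ↔
      (3 ∣ n ∧ ∃ k < 3, ∀ i : ZMod n, x i = decide ((i.val + k) % 3 = 2)) := by
  have : NeZero n := ⟨hn.ne'⟩
  rw [isFixedConfig_rule45_iff]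
  constructor
  · intro hx
    have hper := periodic_three_of_oneHot hx
    have h3 : 3 ∣ n := by
      by_contra h3
      have hconst := hper.apply_eq_apply_zero_of_coprime
        ((Nat.Prime.coprime_iff_not_dvd Nat.prime_three).mpr h3)
      have h₀ := hx 0
      rw [hconst (0 + 1), hconst (0 + 2)] at h₀
      exact not_oneHot_self _ h₀
    refine ⟨h3, eq_pattern001_of_periodic hper ?_⟩
    simpa only [zero_add] using hx 0
  · rintro ⟨h3, k, -, hx⟩
    obtain rfl : x = pattern001 n k := funext hx
    exact oneHot_pattern001 h3 k
end

section
/- Consider Rule 15 on a ring of even size n under the sequential update mode μ = (0, 1, ..., n-1). For every initial configuration x ∈ {0,1}^n, one full sequential step yields one of the two alternating fixed points (01)^{n/2} or (10)^{n/2}. -/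
def rule15 : Bool → Bool → Bool → Bool := fun a _ _ => !a

private lemma foldl_coe_list {n : ℕ} (g : (ZMod n → Bool) → ZMod n → (ZMod n → Bool))
    (l : List ℕ) (x : ZMod n → Bool) :
    List.foldl g x (l >>= fun (a : ℕ) => pure (a : ZMod n)) =
    List.foldl (fun y (k : ℕ) => g y (k : ZMod n)) x l := by
  induction l generalizing x with
  | nil => rfl
  | cons a t ih => simp_all [List.bind_eq_flatMap]

theorem rule15_asc_one_step (n : ℕ) (hn : 0 < n) (he : Even n) (x : ZMod n → Bool) :
    seqStepAsc n rule15 x = (fun i : ZMod n => decide (i.val % 2 = 1)) ∨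
    seqStepAsc n rule15 x = (fun i : ZMod n => decide (i.val % 2 = 0)) := by
  haveI : NeZero n := ⟨hn.ne'⟩
  set b := !x (-1) with hb
  have castne : ∀ i j : ℕ, i < n → j < n → i ≠ j → ((i : ZMod n) ≠ (j : ZMod n)) := by
    intro i j hi hj hij h
    have := congrArg ZMod.val h
    rw [ZMod.val_cast_of_lt hi, ZMod.val_cast_of_lt hj] at this
    exact hij this
  have key : ∀ m, m ≤ n →
      (∀ i, i < m →
        ((List.range m).foldl (fun y (k : ℕ) => eupdate n rule15 y (k : ZMod n)) x) (i : ZMod n)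
          = xor (decide (i % 2 = 1)) b) ∧
      (∀ i, m ≤ i → i < n →
        ((List.range m).foldl (fun y (k : ℕ) => eupdate n rule15 y (k : ZMod n)) x) (i : ZMod n)
          = x (i : ZMod n)) := by
    intro m
    induction m with
    | zero =>
      intro _
      refine ⟨fun i hi => absurd hi (by omega), fun i _ _ => by simp⟩
    | succ m ih =>
      intro hm
      have hmn : m < n := hm
      obtain ⟨ih1, ih2⟩ := ih (le_of_lt hmn)
      rw [List.range_succ, List.foldl_append, List.foldl_cons, List.foldl_nil]
      set y := (List.range m).foldl (fun y (k : ℕ) => eupdate n rule15 y (k : ZMod n)) x with hy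
      have hval : (!y ((m : ZMod n) - 1)) = xor (decide (m % 2 = 1)) b := by
        rcases Nat.eq_zero_or_pos m with hm0 | hm0
        · subst hm0
          have h1 : ((0 : ℕ) : ZMod n) - 1 = ((n - 1 : ℕ) : ZMod n) := by
            have : ((n - 1 : ℕ) : ZMod n) = (n : ZMod n) - 1 := by
              have : n - 1 + 1 = n := by omega
              calc ((n - 1 : ℕ) : ZMod n) = ((n - 1 + 1 : ℕ) : ZMod n) - 1 := by
                    push_cast; ring
                _ = (n : ZMod n) - 1 := by rw [this]
            simp [this]
          rw [h1, ih2 (n - 1) (by omega) (by omega)]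
          have h2 : ((n - 1 : ℕ) : ZMod n) = -1 := by
            have hsum : ((n - 1 : ℕ) : ZMod n) + 1 = 0 := by
              have : ((n - 1 + 1 : ℕ) : ZMod n) = ((n : ℕ) : ZMod n) := by
                congr 1; omega
              push_cast at this
              simpa [ZMod.natCast_self] using this
            linear_combination hsum
          rw [h2, ← hb]
          simp
        · obtain ⟨k, rfl⟩ : ∃ k, m = k + 1 := ⟨m - 1, by omega⟩
          have h1 : ((k + 1 : ℕ) : ZMod n) - 1 = ((k : ℕ) : ZMod n) := by
            push_cast; ring
          rw [h1, ih1 k (by omega)]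
          rcases Nat.mod_two_eq_zero_or_one k with hk | hk
          · have h2 : (k + 1) % 2 = 1 := by omega
            simp [hk, h2]
          · have h2 : (k + 1) % 2 = 0 := by omega
            simp [hk, h2]
      constructor
      · intro i hi
        rcases Nat.lt_succ_iff_lt_or_eq.mp hi with hi' | rfl
        · show (eupdate n rule15 y (m : ZMod n)) (i : ZMod n) = _
          rw [eupdate, Function.update_of_ne (castne i m (by omega) hmn (by omega))]
          exact ih1 i hi'
        · show (eupdate n rule15 y (i : ZMod n)) (i : ZMod n) = _
          rw [eupdate, Function.update_self]
          exact hval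
      · intro i hi1 hi2
        show (eupdate n rule15 y (m : ZMod n)) (i : ZMod n) = _
        rw [eupdate, Function.update_of_ne (castne i m hi2 hmn (by omega))]
        exact ih2 i (by omega) hi2
  obtain ⟨h1, -⟩ := key n le_rfl
  have hall : ∀ i : ZMod n, seqStepAsc n rule15 x i = xor (decide (i.val % 2 = 1)) b := by
    intro i
    have hv : ((i.val : ℕ) : ZMod n) = i := ZMod.natCast_rightInverse i
    have := h1 i.val (ZMod.val_lt i)
    rw [hv] at this
    rw [show seqStepAsc n rule15 x = List.foldl (fun y (k : ℕ) => eupdate n rule15 y (k : ZMod n)) x (List.range n) from foldl_coe_list _ _ _]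
    exact this
  cases hbv : b with
  | false =>
    left
    funext i
    rw [hall i, hbv]
    simp
  | true =>
    right
    funext i
    rw [hall i, hbv]
    rcases Nat.mod_two_eq_zero_or_one i.val with h | h <;> simp [h]
end
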